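/- arXiv:0904.2306 — 2 statements merged into one kernel-verified Lean document; each statement's English description precedes it below -/
import Mathlib

section
/- For every finite simple directed graph G(V,E) in which every vertex has positive indegree, there exists a set S ⊆ V with c(S, G, φ^strict) = V and |S| ≤ ⌊2·|V|/3⌋; that is, the minimum size of an irreversible dynamo of G under the strict-majority scenario is at most ⌊2·|V|/3⌋. -/
/-- The set of in-neighbors of `v` in the directed graph with adjacency
relation `A` (`A u v` means there is an edge from `u` to `v`). -/
def inNbr {V : Type*} (A : V → V → Prop) (v : V) : Set V := {u | A u v}

/-- `dClosure A ok S` is the least superset of `S` closed under the coloring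
rule: a vertex `v` gets colored white as soon as the number `n` of its white
in-neighbors satisfies the threshold condition `ok v n`. -/
def dClosure {V : Type*} (A : V → V → Prop) (ok : V → ℕ → Prop) (S : Set V) : Set V :=
  ⋂₀ {T : Set V | S ⊆ T ∧ ∀ v, ok v ((inNbr A v ∩ T).ncard) → v ∈ T}

/-- The strict-majority threshold `φ^strict(v) = ⌈(deg^in(v)+1)/2⌉`:
`v` is colored white when more than half of its in-neighbors are white,
i.e. `deg^in(v) < 2·n`. -/
def strictOk {V : Type*} (A : V → V → Prop) (v : V) (n : ℕ) : Prop :=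
  (inNbr A v).ncard < 2 * n

/-!
Fix a linear ordering `σ` of `V` and seed every vertex at most half of whose in-neighbours
precede it. The coloring then sweeps along `σ`: any other vertex has a strict majority of its
in-neighbours earlier, and these are white by induction.

For a uniformly random `σ`, the rank of `v` among `v` and its `d ≥ 1` in-neighbours is uniform
on `{0, …, d}`, since swapping `v` with another member of that set is a bijection on orderings.
So `v` is seeded with probability `(⌊d/2⌋ + 1)/(d + 1) ≤ 2/3`, and some ordering has a seed of
size at most `2|V|/3`.
-/

open Finset

section Rank

variable {V α : Type*} [LinearOrder α]

def rankIn (σ : V → α) (W : Finset V) (x : V) : ℕ := #{u ∈ W | σ u < σ x}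

theorem rankIn_lt_rankIn {σ : V → α} {W : Finset V} {x y : V} (hx : x ∈ W) (h : σ x < σ y) :
    rankIn σ W x < rankIn σ W y := by
  refine card_lt_card ⟨monotone_filter_right W fun _ _ hu => hu.trans h, fun hsub => ?_⟩
  simpa using (mem_filter.1 (hsub (mem_filter.2 ⟨hx, h⟩))).2

theorem card_filter_rankIn_le {σ : V → α} (hσ : Function.Injective σ) (W : Finset V) (k : ℕ) :
    #{w ∈ W | rankIn σ W w ≤ k} ≤ k + 1 := by
  calc #{w ∈ W | rankIn σ W w ≤ k} ≤ #(range (k + 1)) := by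
        refine card_le_card_of_injOn (rankIn σ W) (fun w hw => ?_) fun x hx y hy hxy => ?_
        · simpa [Nat.lt_succ_iff] using (mem_filter.1 hw).2
        · rw [mem_coe, mem_filter] at hx hy
          rcases lt_trichotomy (σ x) (σ y) with h | h | h
          · exact absurd hxy (rankIn_lt_rankIn hx.1 h).ne
          · exact hσ h
          · exact absurd hxy (rankIn_lt_rankIn hy.1 h).ne'
    _ = k + 1 := card_range _

@[simp]
theorem rankIn_insert_self [DecidableEq V] (σ : V → α) (W : Finset V) (x : V) :
    rankIn σ (insert x W) x = rankIn σ W x := by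
  simp [rankIn, filter_insert]

theorem rankIn_comp_perm (σ : V → α) {W : Finset V} {π : Equiv.Perm V}
    (hπ : ∀ u, π u ∈ W ↔ u ∈ W) (x : V) : rankIn (σ ∘ π) W x = rankIn σ W (π x) :=
  card_equiv π fun u => by simp [hπ]

theorem swap_apply_mem_iff [DecidableEq V] {W : Finset V} {v w : V} (hv : v ∈ W) (hw : w ∈ W)
    (u : V) : Equiv.swap v w u ∈ W ↔ u ∈ W := by
  rcases eq_or_ne u v with rfl | huv
  · simp [hv, hw]
  rcases eq_or_ne u w with rfl | huw
  · simp [hv, hw]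
  rw [Equiv.swap_apply_of_ne_of_ne huv huw]

variable [Fintype V] [DecidableEq V] [Fintype α]

theorem card_rankIn_le_eq {W : Finset V} {v w : V} (hv : v ∈ W) (hw : w ∈ W) (k : ℕ) :
    #{σ : V ≃ α | rankIn σ W v ≤ k} = #{σ : V ≃ α | rankIn σ W w ≤ k} := by
  refine card_equiv ((Equiv.swap v w).equivCongr (Equiv.refl α)) fun σ => ?_
  have hσ : ⇑((Equiv.swap v w).equivCongr (Equiv.refl α) σ) = σ ∘ Equiv.swap v w := by
    ext; simp
  simp [hσ, rankIn_comp_perm σ (swap_apply_mem_iff hv hw)]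

theorem card_mul_card_rankIn_le {W : Finset V} {v : V} (hv : v ∈ W) (k : ℕ) :
    #W * #{σ : V ≃ α | rankIn σ W v ≤ k} ≤ Fintype.card (V ≃ α) * (k + 1) :=
  card_mul_le_card_mul (s := W) (t := univ) (fun w (σ : V ≃ α) => rankIn σ W w ≤ k)
    (fun _ hw => (card_rankIn_le_eq hv hw k).le)
    fun σ _ => card_filter_rankIn_le σ.injective W k

end Rank

section Dynamo

variable {V : Type*} (A : V → V → Prop)

theorem subset_dClosure (ok : V → ℕ → Prop) (S : Set V) : S ⊆ dClosure A ok S :=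
  fun _ hx => Set.mem_sInter.2 fun _ hT => hT.1 hx

theorem mem_dClosure_of_ok {ok : V → ℕ → Prop} {S : Set V} {v : V} [Finite V]
    (hmono : Monotone (ok v)) (h : ok v (inNbr A v ∩ dClosure A ok S).ncard) :
    v ∈ dClosure A ok S :=
  Set.mem_sInter.2 fun _ hT => hT.2 v <| hmono
    (Set.ncard_le_ncard (Set.inter_subset_inter_right _ (Set.sInter_subset_of_mem hT))) h

theorem strictOk_monotone (v : V) : Monotone (strictOk A v) :=
  fun _ _ h hlt => lt_of_lt_of_le hlt (Nat.mul_le_mul_left 2 h)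

variable [Fintype V] [DecidableRel A]

def inNbrFinset (v : V) : Finset V := {u | A u v}

@[simp]
theorem mem_inNbrFinset {u v : V} : u ∈ inNbrFinset A v ↔ A u v := by
  simp [inNbrFinset]

theorem ncard_inNbr (v : V) : (inNbr A v).ncard = #(inNbrFinset A v) := by
  rw [← Set.ncard_coe_finset]; congr; ext; simp [inNbr]

def majoritySeed {α : Type*} [LinearOrder α] (σ : V → α) : Finset V :=
  {v | 2 * rankIn σ (inNbrFinset A v) v ≤ #(inNbrFinset A v)}

theorem dClosure_majoritySeed {α : Type*} [LinearOrder α] [WellFoundedLT α] (σ : V → α) :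
    dClosure A (strictOk A) (majoritySeed A σ) = Set.univ := by
  refine Set.eq_univ_of_forall fun v => ?_
  induction v using (InvImage.wf σ wellFounded_lt).induction with
  | _ v ih =>
  by_cases hv : v ∈ majoritySeed A σ
  · exact subset_dClosure A _ _ hv
  refine mem_dClosure_of_ok A (strictOk_monotone A v) ?_
  have hlt : #(inNbrFinset A v) < 2 * rankIn σ (inNbrFinset A v) v := by
    simpa [majoritySeed] using hv
  have hearlier : (({u ∈ inNbrFinset A v | σ u < σ v} : Finset V) : Set V) ⊆
      inNbr A v ∩ dClosure A (strictOk A) (majoritySeed A σ) := fun u hu => by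
    simp only [coe_filter, mem_inNbrFinset] at hu
    exact ⟨hu.1, ih u hu.2⟩
  have hwhite := Set.ncard_coe_finset _ ▸ Set.ncard_le_ncard hearlier
  rw [strictOk, ncard_inNbr]
  exact hlt.trans_le (Nat.mul_le_mul_left 2 hwhite)

theorem three_mul_card_mem_majoritySeed_le [DecidableEq V] {α : Type*} [Fintype α]
    [LinearOrder α] {v : V} (hloop : ¬ A v v) (hdeg : ∃ u, A u v) :
    3 * #{σ : V ≃ α | v ∈ majoritySeed A σ} ≤ 2 * Fintype.card (V ≃ α) := by
  set d := #(inNbrFinset A v)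
  have hd : 0 < d := card_pos.2 (hdeg.imp fun u hu => (mem_inNbrFinset A).2 hu)
  have hcount := card_mul_card_rankIn_le (α := α) (mem_insert_self v (inNbrFinset A v)) (d / 2)
  rw [card_insert_of_notMem (by simpa using hloop)] at hcount
  have hseed (σ : V ≃ α) :
      v ∈ majoritySeed A σ ↔ rankIn σ (insert v (inNbrFinset A v)) v ≤ d / 2 := by
    simp [majoritySeed, Nat.le_div_iff_mul_le, mul_comm, d]
  rw [filter_congr fun σ _ => hseed σ]
  refine Nat.le_of_mul_le_mul_left ?_ (Nat.succ_pos d)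
  calc (d + 1) * (3 * _) = 3 * ((d + 1) * _) := by ring
    _ ≤ 3 * (Fintype.card (V ≃ α) * (d / 2 + 1)) := Nat.mul_le_mul_left 3 hcount
    _ ≤ (d + 1) * (2 * Fintype.card (V ≃ α)) := by
      have : 3 * (d / 2 + 1) ≤ 2 * (d + 1) := by omega
      nlinarith

theorem exists_card_majoritySeed_le [DecidableEq V] (hloop : ∀ v, ¬ A v v)
    (hdeg : ∀ v, ∃ u, A u v) :
    ∃ σ : V ≃ Fin (Fintype.card V), 3 * #(majoritySeed A σ) ≤ 2 * Fintype.card V := by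
  set Ω := V ≃ Fin (Fintype.card V)
  have hsum : ∑ σ : Ω, 3 * #(majoritySeed A σ) ≤ ∑ _σ : Ω, 2 * Fintype.card V :=
    calc ∑ σ : Ω, 3 * #(majoritySeed A σ)
        = ∑ v : V, 3 * #{σ : Ω | v ∈ majoritySeed A σ} := by
          rw [← mul_sum, ← mul_sum]
          simp only [card_filter]
          rw [sum_comm]
          simp
      _ ≤ ∑ _v : V, 2 * Fintype.card Ω :=
          sum_le_sum fun v _ => three_mul_card_mem_majoritySeed_le A (hloop v) (hdeg v)
      _ = ∑ _σ : Ω, 2 * Fintype.card V := by simp only [sum_const, card_univ, smul_eq_mul]; ring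
  obtain ⟨σ, -, hσ⟩ := exists_le_of_sum_le ⟨Fintype.equivFin V, mem_univ _⟩ hsum
  exact ⟨σ, hσ⟩

end Dynamo

/-- Theorem: every finite digraph with positive indegrees has an irreversible
dynamo of size at most `⌊2·|V|/3⌋` under the strict-majority scenario. -/
theorem stmt4 {V : Type*} [Fintype V] (A : V → V → Prop)
    (hsimple : ∀ v, ¬ A v v) (hindeg : ∀ v : V, ∃ u, A u v) :
    ∃ S : Set V, dClosure A (strictOk A) S = Set.univ ∧
      S.ncard ≤ 2 * Fintype.card V / 3 := by
  classical
  obtain ⟨σ, hσ⟩ := exists_card_majoritySeed_le A hsimple hindeg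
  refine ⟨majoritySeed A σ, dClosure_majoritySeed A σ, ?_⟩
  rw [Set.ncard_coe_finset, Nat.le_div_iff_mul_le three_pos]
  omega
end

section
/- Every finite simple undirected connected graph G(V,E) admits a proper cut (S, V\S) such that |B(S) ∪ B(V\S)| ≤ 1, i.e., G[S] and G[V\S] together have at most one bad connected component with respect to (S, V\S). -/
/-- The size `e(S, V\S)` of the cut `(S, V\S)`: the number of edges of `G`
with one endpoint in `S` and the other outside `S` (each such edge is counted
once, as the ordered pair whose first coordinate lies in `S`). -/
noncomputable def cutE {V : Type*} (G : SimpleGraph V) (S : Set V) : ℕ :=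
  {p : V × V | G.Adj p.1 p.2 ∧ p.1 ∈ S ∧ p.2 ∉ S}.ncard

/-- `v` is bad with respect to the cut `(S, V\S)`:
`|N(v) ∩ S| = |N(v) \ S|`. -/
def badVtx {V : Type*} (G : SimpleGraph V) (S : Set V) (v : V) : Prop :=
  (G.neighborSet v ∩ S).ncard = (G.neighborSet v \ S).ncard

/-- The cut `(S, V\S)` is proper: no vertex has more neighbors on its own side
than on the other side. -/
def properCut {V : Type*} (G : SimpleGraph V) (S : Set V) : Prop :=
  (∀ v ∈ S, (G.neighborSet v ∩ S).ncard ≤ (G.neighborSet v \ S).ncard) ∧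
  (∀ v ∉ S, (G.neighborSet v \ S).ncard ≤ (G.neighborSet v ∩ S).ncard)

/-- The vertex sets of the connected components of the induced subgraph `G[S]`,
viewed as subsets of `V`. -/
def comps {V : Type*} (G : SimpleGraph V) (S : Set V) : Set (Set V) :=
  {C | ∃ c : (G.induce S).ConnectedComponent, C = Subtype.val '' c.supp}

/-- `badComps G S` is `B(S)`: the set of connected components of `G[S]` all of
whose vertices are bad with respect to the cut `(S, V\S)`. -/
def badComps {V : Type*} (G : SimpleGraph V) (S : Set V) : Set (Set V) :=
  {C | C ∈ comps G S ∧ ∀ v ∈ C, badVtx G S v}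

/-- `dSet G v U = d(v, U) = min_{u ∈ U} d(v, u)`. -/
noncomputable def dSet {V : Type*} (G : SimpleGraph V) (v : V) (U : Set V) : ℕ :=
  sInf ((G.dist v) '' U)

/-- The potential `ψ(S, v*) = e(S, V\S)·|V|² −
[Σ_{Ĥ ∈ B(S)} d(v*, V̂) + Σ_{Ĥ ∈ B(V\S)} d(v*, V̂)]`. -/
noncomputable def psi {V : Type*} [Fintype V] (G : SimpleGraph V) (S : Set V) (vs : V) : ℤ :=
  (cutE G S : ℤ) * (Fintype.card V : ℤ) ^ 2
    - ((∑ᶠ C ∈ badComps G S, (dSet G vs C : ℤ))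
      + ∑ᶠ C ∈ badComps G Sᶜ, (dSet G vs C : ℤ))


/-!
Among the cuts of maximum size choose one minimising the total distance `badDist` from a
fixed vertex `x` to its bad components. A maximum cut is proper, since moving a vertex with
more neighbours on its own side enlarges the cut. If there were two bad components, one of
them, `C₀`, would avoid `x`; let `v ∈ C₀` be its vertex closest to `x` and `u` the next vertex
on a shortest path from `v` to `x`, which lies on the other side. Moving `v` across keeps the
cut size, because `v` is bad, and destroys `C₀`: the neighbours of `v` on its old side now have
strictly more neighbours across than on their side, so they are no longer bad. The only bad
component that can appear contains `v` and hence `u`, which is strictly closer to `x` than `v`.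
So `badDist` drops, contradicting the choice of the cut.
-/

lemma finsum_mem_le_finsum_mem_of_subset {α M : Type*} [AddCommMonoid M] [PartialOrder M]
    [CanonicallyOrderedAdd M] {f : α → M} {s t : Set α} (hst : s ⊆ t) (ht : t.Finite) :
    ∑ᶠ i ∈ s, f i ≤ ∑ᶠ i ∈ t, f i := by
  rw [← finsum_mem_add_sdiff hst ht]
  exact le_self_add

lemma finsum_mem_insert_le {α M : Type*} [AddCommMonoid M] [PartialOrder M]
    [CanonicallyOrderedAdd M] (f : α → M) {a : α} {s : Set α} (hs : s.Finite) :
    ∑ᶠ i ∈ insert a s, f i ≤ f a + ∑ᶠ i ∈ s, f i := by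
  by_cases ha : a ∈ s
  · rw [Set.insert_eq_of_mem ha]
    exact le_add_self
  · rw [finsum_mem_insert f ha hs]

namespace SimpleGraph

variable {V : Type*} {G : SimpleGraph V} {C : Set V} {x y : V}

lemma Reachable.mem_of_adj_closed (hr : G.Reachable x y)
    (hC : ∀ a ∈ C, ∀ b, G.Adj a b → b ∈ C) (hx : x ∈ C) : y ∈ C := by
  obtain ⟨p⟩ := hr
  induction p with
  | nil => exact hx
  | cons hadj _ ih => exact ih (hC _ hx _ hadj)

lemma Reachable.exists_adj_dist_lt (h : G.Reachable x y) (hne : x ≠ y) :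
    ∃ u, G.Adj y u ∧ G.dist x u < G.dist x y := by
  obtain ⟨p, hp⟩ := h.symm.exists_walk_length_eq_dist
  obtain ⟨u, hyu, q, rfl⟩ := p.exists_eq_cons_of_ne hne.symm
  refine ⟨u, hyu, ?_⟩
  rw [dist_comm, dist_comm (u := x), ← hp, Walk.length_cons]
  exact Nat.lt_succ_of_le (dist_le q)

end SimpleGraph

section Components

open SimpleGraph

variable {V : Type*} {G : SimpleGraph V} {S T C C' : Set V} {x y : V}

lemma mem_comps_iff : C ∈ comps G S ↔ C.Nonempty ∧ C ⊆ S ∧ (G.induce C).Preconnected ∧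
    ∀ x ∈ C, ∀ y ∈ S, G.Adj x y → y ∈ C := by
  constructor
  · rintro ⟨c, rfl⟩
    refine ⟨c.nonempty_supp.image _, Subtype.coe_image_subset _ _, ?_, ?_⟩
    · rintro ⟨a, a', ha', rfl⟩ ⟨b, b', hb', rfl⟩
      let f : c.toSimpleGraph →g G.induce (Subtype.val '' c.supp) :=
        { toFun z := ⟨z.1.1, z.1, z.2, rfl⟩, map_rel' := id }
      exact (c.reachable_toSimpleGraph ha' hb').map f
    · rintro _ ⟨x', hx', rfl⟩ y hy hadj
      exact ⟨⟨y, hy⟩, c.mem_supp_of_adj_mem_supp hx' hadj, rfl⟩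
  · rintro ⟨⟨x, hx⟩, hCS, hconn, hclosed⟩
    refine ⟨(G.induce S).connectedComponentMk ⟨x, hCS hx⟩,
      Set.ext fun y => ⟨fun hy => ?_, ?_⟩⟩
    · refine ⟨⟨y, hCS hy⟩, ConnectedComponent.sound ?_, rfl⟩
      exact ((hconn ⟨x, hx⟩ ⟨y, hy⟩).map (G.induceHomOfLE hCS).toHom).symm
    · rintro ⟨y', hy', rfl⟩
      exact (ConnectedComponent.exact hy').symm.mem_of_adj_closed (C := {z : S | z.1 ∈ C})
        (fun a ha b hab => hclosed _ ha _ b.2 hab) hx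

lemma subset_of_mem_comps (hC : C ∈ comps G S) : C ⊆ S := (mem_comps_iff.1 hC).2.1

lemma mem_of_mem_comps_of_adj (hC : C ∈ comps G S) (hx : x ∈ C) (hy : y ∈ S)
    (hxy : G.Adj x y) : y ∈ C :=
  (mem_comps_iff.1 hC).2.2.2 x hx y hy hxy

lemma exists_mem_comps (hx : x ∈ S) : ∃ C ∈ comps G S, x ∈ C :=
  ⟨_, ⟨(G.induce S).connectedComponentMk ⟨x, hx⟩, rfl⟩, ⟨x, hx⟩, rfl, rfl⟩

lemma eq_of_mem_comps (hC : C ∈ comps G S) (hC' : C' ∈ comps G S) (hx : x ∈ C)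
    (hx' : x ∈ C') : C = C' := by
  obtain ⟨c, rfl⟩ := hC
  obtain ⟨c', rfl⟩ := hC'
  obtain ⟨⟨x, hxS⟩, hc, rfl⟩ := hx
  obtain ⟨y, hc', hyx⟩ := hx'
  obtain rfl : y = ⟨x, hxS⟩ := Subtype.ext hyx
  rw [ConnectedComponent.eq_of_common_vertex hc hc']

lemma mem_comps_iff_of_subset (hST : S ⊆ T) (hCS : C ⊆ S)
    (hC : ∀ x ∈ C, ∀ y ∈ T, G.Adj x y → y ∈ S) :
    C ∈ comps G S ↔ C ∈ comps G T := by
  simp only [mem_comps_iff]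
  exact ⟨fun ⟨hne, _, hconn, hcl⟩ => ⟨hne, hCS.trans hST, hconn,
      fun x hx y hy hxy => hcl x hx y (hC x hx y hy hxy) hxy⟩,
    fun ⟨hne, _, hconn, hcl⟩ => ⟨hne, hCS, hconn,
      fun x hx y hy hxy => hcl x hx y (hST hy) hxy⟩⟩

lemma eq_of_mem_badComps_union (hC : C ∈ badComps G S ∪ badComps G Sᶜ)
    (hC' : C' ∈ badComps G S ∪ badComps G Sᶜ) (hx : x ∈ C) (hx' : x ∈ C') : C = C' := by
  rcases hC with hC | hC <;> rcases hC' with hC' | hC'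
  · exact eq_of_mem_comps hC.1 hC'.1 hx hx'
  · exact absurd (subset_of_mem_comps hC.1 hx) (subset_of_mem_comps hC'.1 hx')
  · exact absurd (subset_of_mem_comps hC'.1 hx') (subset_of_mem_comps hC.1 hx)
  · exact eq_of_mem_comps hC.1 hC'.1 hx hx'

end Components

section Cut

open SimpleGraph

variable {V : Type*} {G : SimpleGraph V} {S C : Set V} {v w : V}

lemma neighborSet_inter_diff_singleton_of_not_adj (hwv : ¬ G.Adj w v) :
    G.neighborSet w ∩ (S \ {v}) = G.neighborSet w ∩ S := by
  ext
  simp only [Set.mem_inter_iff, mem_neighborSet, Set.mem_sdiff, Set.mem_singleton_iff]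
  grind

lemma neighborSet_diff_diff_singleton_of_not_adj (hwv : ¬ G.Adj w v) :
    G.neighborSet w \ (S \ {v}) = G.neighborSet w \ S := by
  ext
  simp only [mem_neighborSet, Set.mem_sdiff, Set.mem_singleton_iff]
  grind

lemma badVtx_diff_singleton_iff (hwv : ¬ G.Adj w v) : badVtx G (S \ {v}) w ↔ badVtx G S w := by
  rw [badVtx, badVtx, neighborSet_inter_diff_singleton_of_not_adj hwv,
    neighborSet_diff_diff_singleton_of_not_adj hwv]

lemma mem_badComps_diff_singleton_iff (hCS : C ⊆ S \ {v}) (hC : ∀ x ∈ C, ¬ G.Adj x v) :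
    C ∈ badComps G (S \ {v}) ↔ C ∈ badComps G S := by
  have hcomps : C ∈ comps G (S \ {v}) ↔ C ∈ comps G S :=
    mem_comps_iff_of_subset Set.sdiff_subset hCS fun x hx y hy hxy =>
      ⟨hy, by rintro rfl; exact hC x hx hxy⟩
  simp only [badComps, Set.mem_ofPred_eq, hcomps]
  exact and_congr_right fun _ => forall₂_congr fun x hx => badVtx_diff_singleton_iff (hC x hx)

lemma properCut_iff : properCut G S ↔
    (∀ v ∈ S, (G.neighborSet v ∩ S).ncard ≤ (G.neighborSet v \ S).ncard) ∧
      ∀ v ∈ Sᶜ, (G.neighborSet v ∩ Sᶜ).ncard ≤ (G.neighborSet v \ Sᶜ).ncard := by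
  simp only [properCut, Set.mem_compl_iff, Set.sdiff_compl, ← Set.sdiff_eq]

lemma properCut.compl (h : properCut G S) : properCut G Sᶜ := by
  rw [properCut_iff] at h ⊢
  rw [compl_compl]
  exact h.symm

lemma cutE_compl : cutE G Sᶜ = cutE G S := by
  have : {p : V × V | G.Adj p.1 p.2 ∧ p.1 ∈ Sᶜ ∧ p.2 ∉ Sᶜ} =
      Prod.swap '' {p : V × V | G.Adj p.1 p.2 ∧ p.1 ∈ S ∧ p.2 ∉ S} := by
    rw [Set.image_swap_eq_preimage_swap]
    ext ⟨a, b⟩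
    simp only [Set.mem_ofPred_eq, Set.mem_compl_iff, not_not, Set.mem_preimage,
      Prod.swap_prod_mk]
    exact ⟨fun ⟨h, ha, hb⟩ => ⟨h.symm, hb, ha⟩,
      fun ⟨h, hb, ha⟩ => ⟨h.symm, ha, hb⟩⟩
  rw [cutE, cutE, this, Set.ncard_image_of_injective _ Prod.swap_injective]

variable [Finite V]

lemma ncard_neighborSet_inter_diff_singleton_add_one (hv : v ∈ S) (hwv : G.Adj w v) :
    (G.neighborSet w ∩ (S \ {v})).ncard + 1 = (G.neighborSet w ∩ S).ncard := by
  rw [← Set.inter_sdiff_assoc]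
  exact Set.ncard_sdiff_singleton_add_one ⟨hwv, hv⟩ (Set.toFinite _)

lemma ncard_neighborSet_diff_diff_singleton (hv : v ∈ S) (hwv : G.Adj w v) :
    (G.neighborSet w \ (S \ {v})).ncard = (G.neighborSet w \ S).ncard + 1 := by
  have : G.neighborSet w \ (S \ {v}) = insert v (G.neighborSet w \ S) := by
    ext
    simp only [mem_neighborSet, Set.mem_sdiff, Set.mem_singleton_iff, Set.mem_insert_iff]
    grind
  rw [this, Set.ncard_insert_of_notMem (fun h => h.2 hv) (Set.toFinite _)]

lemma not_badVtx_diff_singleton_of_adj (hv : v ∈ S) (hwv : G.Adj w v)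
    (hw : (G.neighborSet w ∩ S).ncard ≤ (G.neighborSet w \ S).ncard) :
    ¬ badVtx G (S \ {v}) w := by
  have h₁ := ncard_neighborSet_inter_diff_singleton_add_one hv hwv
  have h₂ := ncard_neighborSet_diff_diff_singleton hv hwv
  rw [badVtx]
  omega

lemma cutE_diff_singleton_add (hv : v ∈ S) :
    cutE G (S \ {v}) + (G.neighborSet v \ S).ncard =
      cutE G S + (G.neighborSet v ∩ S).ncard := by
  have hsplit : {p : V × V | G.Adj p.1 p.2 ∧ p.1 ∈ S \ {v} ∧ p.2 ∉ S \ {v}} ∪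
        Prod.mk v '' (G.neighborSet v \ S) =
      {p : V × V | G.Adj p.1 p.2 ∧ p.1 ∈ S ∧ p.2 ∉ S} ∪
        (fun a => (a, v)) '' (G.neighborSet v ∩ S) := by
    ext ⟨a, b⟩
    simp only [Set.mem_union, Set.mem_ofPred_eq, Set.mem_sdiff, Set.mem_singleton_iff,
      Set.mem_image, Set.mem_inter_iff, mem_neighborSet, Prod.mk.injEq]
    have := G.loopless.irrefl a
    have := G.adj_comm a b
    grind
  have hdisj₁ : Disjoint {p : V × V | G.Adj p.1 p.2 ∧ p.1 ∈ S \ {v} ∧ p.2 ∉ S \ {v}}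
      (Prod.mk v '' (G.neighborSet v \ S)) := by
    rw [Set.disjoint_left]
    rintro _ ⟨-, ⟨-, h⟩, -⟩ ⟨b, -, rfl⟩
    exact h rfl
  have hdisj₂ : Disjoint {p : V × V | G.Adj p.1 p.2 ∧ p.1 ∈ S ∧ p.2 ∉ S}
      ((fun a => (a, v)) '' (G.neighborSet v ∩ S)) := by
    rw [Set.disjoint_left]
    rintro _ ⟨-, -, h⟩ ⟨a, -, rfl⟩
    exact h hv
  have := congrArg Set.ncard hsplit
  rwa [Set.ncard_union_eq hdisj₁ (Set.toFinite _) (Set.toFinite _),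
    Set.ncard_union_eq hdisj₂ (Set.toFinite _) (Set.toFinite _),
    Set.ncard_image_of_injective _ (Prod.mk_right_injective v),
    Set.ncard_image_of_injective _ (Prod.mk_left_injective v)] at this

lemma ncard_neighborSet_inter_le_of_forall_cutE_le (hmax : ∀ T, cutE G T ≤ cutE G S)
    (hv : v ∈ S) : (G.neighborSet v ∩ S).ncard ≤ (G.neighborSet v \ S).ncard := by
  have := cutE_diff_singleton_add (G := G) hv
  have := hmax (S \ {v})
  omega

lemma properCut_of_forall_cutE_le (hmax : ∀ T, cutE G T ≤ cutE G S) : properCut G S :=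
  properCut_iff.2 ⟨fun _ => ncard_neighborSet_inter_le_of_forall_cutE_le hmax,
    fun _ => ncard_neighborSet_inter_le_of_forall_cutE_le fun T => cutE_compl (S := S) ▸ hmax T⟩

end Cut

section Potential

open SimpleGraph

variable {V : Type*} {G : SimpleGraph V} {S C C₀ D : Set V} {v x y : V}

lemma dSet_le_dist (hy : y ∈ C) : dSet G x C ≤ G.dist x y := Nat.sInf_le ⟨y, hy, rfl⟩

lemma exists_dist_eq_dSet (hC : C.Nonempty) : ∃ y ∈ C, G.dist x y = dSet G x C :=
  Nat.sInf_mem (hC.image _)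

/-- The bad-component term of `psi`, minimised after the cut size is maximised rather than
traded against it with weight `|V|²`. -/
noncomputable def badDist (G : SimpleGraph V) (x : V) (S : Set V) : ℕ :=
  ∑ᶠ C ∈ badComps G S ∪ badComps G Sᶜ, dSet G x C

lemma badDist_compl : badDist G x Sᶜ = badDist G x S := by
  rw [badDist, badDist, compl_compl, Set.union_comm]

variable [Finite V]

lemma badComps_union_diff_singleton_subset (hS : properCut G S) (hvS : v ∈ S)
    (hvC₀ : v ∈ C₀) (hD : D ∈ comps G (S \ {v})ᶜ) (hvD : v ∈ D) :
    badComps G (S \ {v}) ∪ badComps G (S \ {v})ᶜ ⊆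
      insert D ((badComps G S ∪ badComps G Sᶜ) \ {C₀}) := by
  rintro C (hC | hC)
  · have hCS := subset_of_mem_comps hC.1
    have hnadj : ∀ y ∈ C, ¬ G.Adj y v := fun y hy hyv =>
      not_badVtx_diff_singleton_of_adj hvS hyv (hS.1 y (hCS hy).1) (hC.2 y hy)
    refine Or.inr ⟨Or.inl ((mem_badComps_diff_singleton_iff hCS hnadj).1 hC), ?_⟩
    rintro rfl
    exact (hCS hvC₀).2 rfl
  · by_cases hvC : v ∈ C
    · exact Or.inl (eq_of_mem_comps hC.1 hD hvC hvD)
    have hnadj : ∀ y ∈ C, ¬ G.Adj y v := fun y hy hyv =>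
      hvC (mem_of_mem_comps_of_adj hC.1 hy (by simp) hyv)
    have hCS : C ⊆ (S \ {v})ᶜ \ {v} := Set.subset_sdiff_singleton (subset_of_mem_comps hC.1) hvC
    have hcompl : (S \ {v})ᶜ \ {v} = Sᶜ := by
      rw [Set.compl_sdiff, Set.singleton_union, Set.insert_sdiff_self_of_notMem (by simpa)]
    refine Or.inr ⟨Or.inr ?_, ?_⟩
    · rw [← hcompl]
      exact (mem_badComps_diff_singleton_iff hCS hnadj).2 hC
    · rintro rfl
      exact hvC hvC₀

lemma exists_cutE_eq_badDist_lt (hconn : G.Connected) (hS : properCut G S)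
    (hC₀ : C₀ ∈ badComps G S) (hx : x ∉ C₀) :
    ∃ T, cutE G T = cutE G S ∧ badDist G x T < badDist G x S := by
  obtain ⟨v, hvC₀, hdv⟩ := exists_dist_eq_dSet (G := G) (x := x) (mem_comps_iff.1 hC₀.1).1
  have hvS : v ∈ S := subset_of_mem_comps hC₀.1 hvC₀
  obtain ⟨u, hvu, hu⟩ := (hconn x v).exists_adj_dist_lt (ne_of_mem_of_not_mem hvC₀ hx).symm
  have huS : u ∉ S := fun huS =>
    (dSet_le_dist (mem_of_mem_comps_of_adj hC₀.1 hvC₀ huS hvu)).not_gt (hdv ▸ hu)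
  obtain ⟨D, hD, hvD⟩ := exists_mem_comps (G := G) (S := (S \ {v})ᶜ) (x := v) (by simp)
  have hDC₀ : dSet G x D < dSet G x C₀ :=
    (dSet_le_dist (mem_of_mem_comps_of_adj hD hvD (by simp [huS]) hvu)).trans_lt (hdv ▸ hu)
  refine ⟨S \ {v}, ?_, ?_⟩
  · have := cutE_diff_singleton_add (G := G) hvS
    have := hC₀.2 v hvC₀
    rw [badVtx] at this
    omega
  set B := (badComps G S ∪ badComps G Sᶜ) \ {C₀}
  calc badDist G x (S \ {v}) ≤ ∑ᶠ C ∈ insert D B, dSet G x C :=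
        finsum_mem_le_finsum_mem_of_subset
          (badComps_union_diff_singleton_subset hS hvS hvC₀ hD hvD) (Set.toFinite _)
    _ ≤ dSet G x D + ∑ᶠ C ∈ B, dSet G x C := finsum_mem_insert_le _ (Set.toFinite _)
    _ < dSet G x C₀ + ∑ᶠ C ∈ B, dSet G x C := by omega
    _ = badDist G x S := by
      rw [← finsum_mem_insert _ (fun h => h.2 rfl) (Set.toFinite _), Set.insert_sdiff_singleton,
        Set.insert_eq_of_mem (Set.mem_union_left _ hC₀), badDist]

end Potential

/-- Lemma: every finite connected graph admits a proper cut `(S, V\S)` such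
that `G[S]` and `G[V\S]` together have at most one bad connected component. -/
theorem stmt14 {V : Type*} [Fintype V] (G : SimpleGraph V) (hconn : G.Connected) :
    ∃ S : Set V, properCut G S ∧ (badComps G S ∪ badComps G Sᶜ).ncard ≤ 1 := by
  obtain ⟨x⟩ := hconn.nonempty
  obtain ⟨S₀, hS₀⟩ := Finite.exists_max (cutE G)
  obtain ⟨S, hS, hmin⟩ := Set.exists_min_image {T | cutE G T = cutE G S₀} (badDist G x)
    (Set.toFinite _) ⟨S₀, rfl⟩
  have hproper := properCut_of_forall_cutE_le fun T => hS ▸ hS₀ T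
  refine ⟨S, hproper, ?_⟩
  by_contra! h
  obtain ⟨C₁, C₂, hC₁, hC₂, hne⟩ := (Set.one_lt_ncard_iff (Set.toFinite _)).1 h
  obtain ⟨C₀, hC₀, hx⟩ : ∃ C₀ ∈ badComps G S ∪ badComps G Sᶜ, x ∉ C₀ := by
    by_cases hx₁ : x ∈ C₁
    · exact ⟨C₂, hC₂, fun hx₂ => hne (eq_of_mem_badComps_union hC₁ hC₂ hx₁ hx₂)⟩
    · exact ⟨C₁, hC₁, hx₁⟩
  obtain ⟨T, hT, hlt⟩ : ∃ T, cutE G T = cutE G S ∧ badDist G x T < badDist G x S := by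
    rcases hC₀ with hC₀ | hC₀
    · exact exists_cutE_eq_badDist_lt hconn hproper hC₀ hx
    · rw [← cutE_compl, ← badDist_compl]
      exact exists_cutE_eq_badDist_lt hconn hproper.compl hC₀ hx
  exact (hmin T (hT.trans hS)).not_gt hlt
end
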